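/- Let A be a preadditive category with a zero object, kernels and cokernels. If g• : B• → C• is a chain map and φ• = {φ_n : B_n → C_{n+1}} is a chain nullhomotopy for g• (i.e., φ_n·d^C_{n+1} + d^B_n·φ_{n-1} = g_n for all n), then the arrows F(φ)_n := k^B_{n-1}·φ_{n-1}·q^C_n : Ker(d^B_{n-1}) → Cok(d^C_{n+1}) satisfy h^{FB}_n·F(φ)_n = ḡ_n and F(φ)_n·h^{FC}_n = g̲_n, i.e., F(φ)• is a Θ_Δ-nullhomotopy on the morphism F(g•) of sequentiable families; moreover this assignment is compatible with pre- and post-composition by chain maps: F(f• ∘ φ• ∘ h•) = F(f•) ∘ F(φ•) ∘ F(h•), so F is a morphism of categories with nullhomotopies (Ch(A), Θ_Ch) → (Seq(A), Θ_Δ). -/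

import Mathlib

/-!
Both identities of a `Θ_Δ`-nullhomotopy are checked after precomposing with the epimorphism
`q^B` (resp. postcomposing with the monomorphism `k^C`). There they become
`d^B ≫ φ ≫ q^C = g ≫ q^C` (resp. `k^B ≫ φ ≫ d^C = k^B ≫ g`): the homotopy relation, whose
summand through the other differential is killed by `q^C` (resp. by `k^B`).
-/

open CategoryTheory CategoryTheory.Limits

noncomputable section

universe v u

variable {A : Type u} [Category.{v} A] [HasZeroMorphisms A] [HasKernels A] [HasCokernels A]

/-- The factorization `C_q ⟶ Ker(d r s)` of the differential `d q r`. -/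
def kFac (C : ChainComplex A ℤ) (q r s : ℤ) : C.X q ⟶ kernel (C.d r s) :=
  kernel.lift (C.d r s) (C.d q r) (C.d_comp_d q r s)

/-- The canonical arrow `h^{FC} : Cok(d p q) ⟶ Ker(d r s)` induced by the differential
`d q r` of the complex `C` (for a window `p, q, r, s` of indices): the unique arrow with
`q^C ≫ h^{FC} ≫ k^C = d q r`. -/
def hSeq (C : ChainComplex A ℤ) (p q r s : ℤ) : cokernel (C.d p q) ⟶ kernel (C.d r s) :=
  cokernel.desc (C.d p q) (kFac C q r s) (by
    rw [← cancel_mono (kernel.ι (C.d r s))]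
    simp [kFac])

/-- The canonical connecting arrow `Cok(h^{FC}_{n+1}) ⟶ Ker(h^{FC}_n)` (for a window
`p, q, r, s, t` of indices), the unique arrow `i` with
`cokernel.π ≫ i ≫ kernel.ι = kernel.ι ≫ cokernel.π`. -/
def iSeq (C : ChainComplex A ℤ) (p q r s t : ℤ) :
    cokernel (hSeq C p q r s) ⟶ kernel (hSeq C q r s t) :=
  kernel.lift (hSeq C q r s t)
    (cokernel.desc (hSeq C p q r s) (kernel.ι (C.d r s) ≫ cokernel.π (C.d q r))
      (by
        ext
        simp [hSeq, kFac]))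
    (by
      rw [← cancel_epi (cokernel.π (hSeq C p q r s)), ← cancel_mono (kernel.ι (C.d s t))]
      simp only [comp_zero, zero_comp, Category.assoc]
      rw [cokernel.π_desc_assoc]
      simp [hSeq, kFac])

/-- The arrow induced by a chain map on the cokernels of the differentials. -/
def cokMap {B C : ChainComplex A ℤ} (g : B ⟶ C) (p q : ℤ) :
    cokernel (B.d p q) ⟶ cokernel (C.d p q) :=
  cokernel.map (B.d p q) (C.d p q) (g.f p) (g.f q) (g.comm p q).symm

/-- The arrow induced by a chain map on the kernels of the differentials. -/
def kerMap {B C : ChainComplex A ℤ} (g : B ⟶ C) (r s : ℤ) :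
    kernel (B.d r s) ⟶ kernel (C.d r s) :=
  kernel.map (B.d r s) (C.d r s) (g.f r) (g.f s) (g.comm r s).symm

/-- Naturality of `hSeq` with respect to chain maps. -/
theorem hSeq_nat {B C : ChainComplex A ℤ} (g : B ⟶ C) (p q r s : ℤ) :
    hSeq B p q r s ≫ kerMap g r s = cokMap g p q ≫ hSeq C p q r s := by
  ext
  simp [hSeq, kFac, kerMap, cokMap]

/-- `φ` is a chain nullhomotopy for the chain map `g`, i.e.
`φ_n ≫ d^C_{n+1} + d^B_n ≫ φ_{n-1} = g_n` for all `n`. -/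
def IsChainNullhomotopy {B C : ChainComplex A ℤ} [Preadditive A] (g : B ⟶ C)
    (φ : ∀ n : ℤ, B.X n ⟶ C.X (n+1)) : Prop :=
  ∀ n : ℤ, φ (n+1) ≫ C.d (n+1+1) (n+1) + B.d (n+1) n ≫ φ n = g.f (n+1)

/-- The `Θ_Δ`-nullhomotopy `F(φ)` on `F(g)` induced by a chain nullhomotopy `φ`, in
degree `n+1`: `F(φ)_{n+1} = k^B_n ≫ φ_n ≫ q^C_{n+2}`. -/
def Fnull {B C : ChainComplex A ℤ} (φ : ∀ n : ℤ, B.X n ⟶ C.X (n+1)) (n : ℤ) :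
    kernel (B.d n (n-1)) ⟶ cokernel (C.d (n+2) (n+1)) :=
  kernel.ι (B.d n (n-1)) ≫ φ n ≫ cokernel.π (C.d (n+2) (n+1))

section

variable {A : Type*} [Category A] [HasZeroMorphisms A]

theorem HomologicalComplex.d_comp_cokernel_π_of_eq {ι : Type*} {c : ComplexShape ι}
    [HasCokernels A] (C : HomologicalComplex A c) {i i' j : ι} (h : i = i') :
    C.d i j ≫ cokernel.π (C.d i' j) = 0 := by
  subst h
  exact cokernel.condition _

theorem HomologicalComplex.kernel_ι_comp_d_of_eq {ι : Type*} {c : ComplexShape ι}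
    [HasKernels A] (C : HomologicalComplex A c) {i j j' : ι} (h : j' = j) :
    kernel.ι (C.d i j') ≫ C.d i j = 0 := by
  subst h
  exact kernel.condition _

theorem Fnull_precomp_postcomp [HasKernels A] [HasCokernels A] {A' B C D : ChainComplex A ℤ}
    (e : A' ⟶ B) (φ : ∀ n : ℤ, B.X n ⟶ C.X (n+1)) (h : C ⟶ D) (n : ℤ) :
    Fnull (fun m => e.f m ≫ φ m ≫ h.f (m+1)) n
      = kerMap e n (n-1) ≫ Fnull φ n ≫ cokMap h (n+2) (n+1) := by
  simp [Fnull, kerMap, cokMap]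

end

section

variable {A : Type*} [Category A] [Preadditive A] [HasKernels A]
  {B C : ChainComplex A ℤ} {g : B ⟶ C} {φ : ∀ n : ℤ, B.X n ⟶ C.X (n+1)}

theorem IsChainNullhomotopy.kernel_ι_comp_f (hφ : IsChainNullhomotopy g φ) (n : ℤ) :
    kernel.ι (B.d n (n-1)) ≫ g.f n = kernel.ι (B.d n (n-1)) ≫ φ n ≫ C.d (n+1) n := by
  obtain ⟨m, rfl⟩ : ∃ m, n = m + 1 := ⟨n - 1, by ring⟩
  rw [← hφ m, Preadditive.comp_add, ← Category.assoc (kernel.ι _) (B.d _ _),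
    B.kernel_ι_comp_d_of_eq (by ring), zero_comp, add_zero]

theorem hSeq_comp_Fnull [HasCokernels A] (hφ : IsChainNullhomotopy g φ) (n : ℤ) :
    hSeq B (n+2) (n+1) n (n-1) ≫ Fnull φ n = cokMap g (n+2) (n+1) := by
  ext
  calc cokernel.π _ ≫ hSeq B _ _ _ _ ≫ Fnull φ n
        = B.d (n+1) n ≫ φ n ≫ cokernel.π _ := by simp [hSeq, kFac, Fnull]
    _ = g.f (n+1) ≫ cokernel.π _ := by
        rw [← hφ n, Preadditive.add_comp, Category.assoc, Category.assoc,
          C.d_comp_cokernel_π_of_eq (by ring), comp_zero, zero_add]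
    _ = cokernel.π _ ≫ cokMap g _ _ := by simp [cokMap]

theorem Fnull_comp_hSeq [HasCokernels A] (hφ : IsChainNullhomotopy g φ) (n : ℤ) :
    Fnull φ n ≫ hSeq C (n+2) (n+1) n (n-1) = kerMap g n (n-1) := by
  ext
  calc (Fnull φ n ≫ hSeq C _ _ _ _) ≫ kernel.ι _ = kernel.ι _ ≫ φ n ≫ C.d (n+1) n := by
        simp [Fnull, hSeq, kFac]
    _ = kernel.ι _ ≫ g.f n := (hφ.kernel_ι_comp_f n).symm
    _ = kerMap g _ _ ≫ kernel.ι _ := by simp [kerMap]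

end

theorem F_morphism_of_nullhomotopy_structures_general
    (A : Type u) [Category.{v} A] [Preadditive A]
    [HasKernels A] [HasCokernels A] :
    (∀ (B C : ChainComplex A ℤ) (g : B ⟶ C) (φ : ∀ n : ℤ, B.X n ⟶ C.X (n+1)),
      IsChainNullhomotopy g φ →
      ∀ n : ℤ,
        hSeq B (n+2) (n+1) n (n-1) ≫ Fnull φ n = cokMap g (n+2) (n+1) ∧
        Fnull φ n ≫ hSeq C (n+2) (n+1) n (n-1) = kerMap g n (n-1)) ∧
    (∀ (A' B C D : ChainComplex A ℤ) (e : A' ⟶ B) (φ : ∀ n : ℤ, B.X n ⟶ C.X (n+1))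
        (h : C ⟶ D) (n : ℤ),
      Fnull (fun m => e.f m ≫ φ m ≫ h.f (m+1)) n
        = kerMap e n (n-1) ≫ Fnull φ n ≫ cokMap h (n+2) (n+1)) :=
  ⟨fun _ _ _ _ hφ n => ⟨hSeq_comp_Fnull hφ n, Fnull_comp_hSeq hφ n⟩,
    fun _ _ _ _ e φ h n => Fnull_precomp_postcomp e φ h n⟩

/-- **Statement 16** (`F` is a morphism of categories with nullhomotopies
`(Ch(A), Θ_Ch) ⟶ (Seq(A), Θ_Δ)`).  If `φ` is a chain nullhomotopy for `g : B ⟶ C`, then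
`F(φ)` satisfies `h^{FB} ≫ F(φ) = ḡ` and `F(φ) ≫ h^{FC} = g̲`, i.e. it is a
`Θ_Δ`-nullhomotopy on the morphism `F(g)` of sequentiable families; moreover the
assignment is compatible with pre- and post-composition by chain maps:
`F(e ∘ φ ∘ h) = F(e) ∘ F(φ) ∘ F(h)`. -/
theorem F_morphism_of_nullhomotopy_structures
    (A : Type u) [Category.{v} A] [Preadditive A] [HasZeroObject A]
    [HasKernels A] [HasCokernels A] :
    (∀ (B C : ChainComplex A ℤ) (g : B ⟶ C) (φ : ∀ n : ℤ, B.X n ⟶ C.X (n+1)),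
      IsChainNullhomotopy g φ →
      ∀ n : ℤ,
        hSeq B (n+2) (n+1) n (n-1) ≫ Fnull φ n = cokMap g (n+2) (n+1) ∧
        Fnull φ n ≫ hSeq C (n+2) (n+1) n (n-1) = kerMap g n (n-1)) ∧
    (∀ (A' B C D : ChainComplex A ℤ) (e : A' ⟶ B) (φ : ∀ n : ℤ, B.X n ⟶ C.X (n+1))
        (h : C ⟶ D) (n : ℤ),
      Fnull (fun m => e.f m ≫ φ m ≫ h.f (m+1)) n
        = kerMap e n (n-1) ≫ Fnull φ n ≫ cokMap h (n+2) (n+1)) :=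
  F_morphism_of_nullhomotopy_structures_general A
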